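/- arXiv:2509.20471 — 3 statements merged into one kernel-verified Lean document; each statement's English description precedes it below -/
import Mathlib

section
/- For every p ∈ ℕ, every c > 0 and all real numbers x, y: H_p(x − y, c) = Σ_{m=0}^{p} (p choose m) · (−y)^{p−m} · H_m(x, c), where H_p(·, c) is the Hermite polynomial with variance c. (This is the deterministic binomial identity underlying the binomial theorem for Wick powers.) -/
open Finset

open Polynomial in
private noncomputable def hermiteR (p : ℕ) : Polynomial ℝ :=
  (hermite p).map (Int.castRingHom ℝ)

open Polynomial in
private lemma hermiteR_succ (p : ℕ) :
    hermiteR (p + 1) = X * hermiteR p - derivative (hermiteR p) := by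
  unfold hermiteR
  rw [hermite_succ, Polynomial.map_sub, Polynomial.map_mul, map_X, derivative_map]

open Polynomial in
private lemma hermiteR_comp (a : ℝ) (p : ℕ) :
    (hermiteR p).comp (X + C a) =
      ∑ m ∈ range (p + 1), C ((p.choose m : ℝ) * a ^ (p - m)) * hermiteR m := by
  induction p with
  | zero => simp [hermiteR, hermite_zero]
  | succ p ih =>
    have hD : derivative ((hermiteR p).comp (X + C a))
        = (derivative (hermiteR p)).comp (X + C a) := by
      rw [derivative_comp]; simp
    have key : (hermiteR (p + 1)).comp (X + C a)
        = ∑ m ∈ range (p + 1),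
            (C ((p.choose m : ℝ) * a ^ (p - m)) * hermiteR (m + 1)
              + C ((p.choose m : ℝ) * a ^ (p - m) * a) * hermiteR m) := by
      rw [hermiteR_succ, sub_comp, mul_comp, X_comp, ← hD, ih, derivative_sum,
        Finset.mul_sum, ← Finset.sum_sub_distrib]
      refine Finset.sum_congr rfl fun m _ => ?_
      rw [derivative_mul, derivative_C, hermiteR_succ]
      simp only [C_mul]
      ring
    rw [key, Finset.sum_add_distrib]
    have hB : (∑ m ∈ range (p + 1), C ((p.choose m : ℝ) * a ^ (p - m) * a) * hermiteR m)
        = ∑ m ∈ range (p + 2), C ((p.choose m : ℝ) * a ^ (p - m) * a) * hermiteR m := by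
      rw [Finset.sum_range_succ (n := p + 1)]
      simp [Nat.choose_succ_self]
    rw [hB, Finset.sum_range_succ' (fun m => C (((p:ℕ).choose m : ℝ) * a ^ (p - m) * a) * hermiteR m) (p + 1),
      Finset.sum_range_succ' (fun m => C ((((p+1):ℕ).choose m : ℝ) * a ^ (p + 1 - m)) * hermiteR m) (p + 1)]
    rw [← add_assoc, ← Finset.sum_add_distrib]
    congr 1
    · refine Finset.sum_congr rfl fun m hm => ?_
      rw [← add_mul, ← C_add]
      congr 1
      have hch : (((p+1).choose (m+1) : ℕ) : ℝ) = (p.choose m : ℝ) + (p.choose (m+1) : ℝ) := by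
        rw [Nat.choose_succ_succ]; push_cast; ring
      have hsub : p + 1 - (m + 1) = p - m := by omega
      rw [hsub, hch]
      rcases Nat.lt_or_ge m p with h | h
      · have hpm : p - (m + 1) + 1 = p - m := by omega
        rw [← hpm, pow_succ]; ring
      · have hmr : m < p + 1 := Finset.mem_range.mp hm
        have hm' : m = p := by omega
        subst hm'
        simp [Nat.choose_succ_self]
    · simp [pow_succ]

open Polynomial in
private lemma aeval_hermite_add (p : ℕ) (x a : ℝ) :
    aeval (x + a) (hermite p) =
      ∑ m ∈ range (p + 1), (p.choose m : ℝ) * a ^ (p - m) * aeval x (hermite m) := by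
  have h := congrArg (eval x) (hermiteR_comp a p)
  have hx : eval x ((hermiteR p).comp (X + C a)) = eval (x + a) (hermiteR p) := by
    rw [eval_comp]; simp
  rw [hx] at h
  have haev : ∀ (z : ℝ) (m : ℕ), eval z (hermiteR m) = aeval z (hermite m) := by
    intro z m
    rw [aeval_def, eval₂_eq_eval_map, hermiteR]
    norm_num
  rw [haev] at h
  rw [h, eval_finset_sum]
  refine Finset.sum_congr rfl fun m _ => ?_
  rw [eval_mul, eval_C, haev]

/-- The Hermite polynomial with variance `c`: `H_p(y, c) = c^(p/2) · He_p(y / √c)`,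
where `He_p` is the `p`-th probabilists' Hermite polynomial. -/
noncomputable def hermiteVariance (p : ℕ) (c y : ℝ) : ℝ :=
  c ^ ((p : ℝ) / 2) * Polynomial.aeval (y / Real.sqrt c) (Polynomial.hermite p)

/-- Binomial identity for Hermite polynomials with variance `c`
(the deterministic identity underlying the binomial theorem for Wick powers):
`H_p(x - y, c) = ∑_{m=0}^{p} (p choose m) (-y)^(p-m) H_m(x, c)`. -/
theorem hermiteVariance_binomial (p : ℕ) (c : ℝ) (hc : 0 < c) (x y : ℝ) :
    hermiteVariance p c (x - y) =
      ∑ m ∈ Finset.range (p + 1),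
        (p.choose m : ℝ) * (-y) ^ (p - m) * hermiteVariance m c x := by
  have hs : Real.sqrt c ≠ 0 := by positivity
  have hxy : (x - y) / Real.sqrt c = x / Real.sqrt c + (-y) / Real.sqrt c := by ring
  rw [hermiteVariance, hxy, aeval_hermite_add, Finset.mul_sum]
  refine Finset.sum_congr rfl fun m hm => ?_
  have hmp : m ≤ p := by
    have := Finset.mem_range.mp hm; omega
  rw [hermiteVariance]
  have hpow : c ^ ((p : ℝ) / 2) * ((-y) / Real.sqrt c) ^ (p - m)
      = (-y) ^ (p - m) * c ^ ((m : ℝ) / 2) := by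
    rw [div_pow]
    have hsq : Real.sqrt c ^ (p - m) = c ^ (((p - m : ℕ) : ℝ) / 2) := by
      rw [Real.sqrt_eq_rpow, ← Real.rpow_natCast (c ^ (1/2 : ℝ)) (p - m),
        ← Real.rpow_mul hc.le]
      ring_nf
    rw [hsq]
    have hcc : c ^ ((p:ℝ)/2) = c ^ ((m:ℝ)/2) * c ^ (((p - m : ℕ):ℝ)/2) := by
      rw [← Real.rpow_add hc]
      congr 1
      rw [Nat.cast_sub hmp]
      ring
    have hne : c ^ (((p - m : ℕ):ℝ)/2) ≠ 0 := by positivity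
    rw [hcc]
    field_simp
  calc c ^ ((p : ℝ) / 2) * ((p.choose m : ℝ) * ((-y) / Real.sqrt c) ^ (p - m)
        * (Polynomial.aeval (x / Real.sqrt c)) (Polynomial.hermite m))
      = (p.choose m : ℝ) * (c ^ ((p : ℝ) / 2) * ((-y) / Real.sqrt c) ^ (p - m))
        * (Polynomial.aeval (x / Real.sqrt c)) (Polynomial.hermite m) := by ring
    _ = _ := by rw [hpow]; ring
end

section
/- Let γ be the standard Gaussian measure on ℝ^n and let p be a polynomial in n real variables that is not constant. Then the law of p under γ, i.e. the pushforward of γ by the map x ↦ p(x), is absolutely continuous with respect to Lebesgue measure on ℝ. (Random variables given by non-constant polynomials of finitely many jointly Gaussian variables have absolutely continuous laws; this is the finite-dimensional instance of absolute continuity of non-constant Wiener-chaos elements used to show that the enhanced balls are continuity sets of the Φ⁴₃ measure.) -/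
open MeasureTheory

/-- Preimage of a Lebesgue-null set under a nonconstant real polynomial is null. -/
lemma poly1d_preimage_null (q : Polynomial ℝ) (hq : Polynomial.derivative q ≠ 0)
    {A : Set ℝ} (hA : volume A = 0) :
    volume {t : ℝ | Polynomial.eval t q ∈ A} = 0 := by
  obtain ⟨A', hAA', hA'm, hA'0⟩ : ∃ A', A ⊆ A' ∧ MeasurableSet A' ∧ volume A' = 0 :=
    ⟨toMeasurable volume A, subset_toMeasurable _ _, measurableSet_toMeasurable _ _, by
      rwa [measure_toMeasurable]⟩
  set Z : Set ℝ := {t | Polynomial.eval t (Polynomial.derivative q) = 0} with hZdef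
  have hZfin : Z.Finite := Polynomial.finite_setOf_isRoot hq
  have key : ∀ a b : ℚ, Set.Ioo (a : ℝ) b ∩ Z = ∅ →
      volume ({t : ℝ | Polynomial.eval t q ∈ A'} ∩ Set.Ioo (a : ℝ) b) = 0 := by
    intro a b hab
    set s := {t : ℝ | Polynomial.eval t q ∈ A'} ∩ Set.Ioo (a : ℝ) b with hsdef
    have hsm : MeasurableSet s :=
      ((q.continuous).measurable hA'm).inter measurableSet_Ioo
    have hsub : s ⊆ Set.Ioo (a : ℝ) b := Set.inter_subset_right
    have hinj : Set.InjOn (fun t => Polynomial.eval t q) s := by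
      have hIoo : Set.InjOn (fun t => Polynomial.eval t q) (Set.Ioo (a : ℝ) b) := by
        intro x hx y hy hxy
        by_contra hne
        rcases lt_or_gt_of_ne hne with hlt | hlt
        · obtain ⟨c, hc, hc0⟩ := exists_deriv_eq_zero hlt
            (q.continuous.continuousOn) hxy
          rw [Polynomial.deriv] at hc0
          exact absurd hab (Set.Nonempty.ne_empty
            ⟨c, ⟨lt_trans hx.1 hc.1, lt_trans hc.2 hy.2⟩, hc0⟩)
        · obtain ⟨c, hc, hc0⟩ := exists_deriv_eq_zero hlt
            (q.continuous.continuousOn) hxy.symm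
          rw [Polynomial.deriv] at hc0
          exact absurd hab (Set.Nonempty.ne_empty
            ⟨c, ⟨lt_trans hy.1 hc.1, lt_trans hc.2 hx.2⟩, hc0⟩)
      exact hIoo.mono hsub
    have hderiv : ∀ x ∈ s, HasFDerivWithinAt (fun t => Polynomial.eval t q)
        ((1 : ℝ →L[ℝ] ℝ).smulRight (Polynomial.eval x (Polynomial.derivative q))) s x :=
      fun x _ => ((q.hasDerivAt x).hasDerivWithinAt).hasFDerivWithinAt
    have hcov := lintegral_abs_det_fderiv_eq_addHaar_image volume hsm hderiv hinj
    simp only [ContinuousLinearMap.smulRight_one_eq_toSpanSingleton, ContinuousLinearMap.det_toSpanSingleton] at hcov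
    have himg : volume ((fun t => Polynomial.eval t q) '' s) = 0 :=
      measure_mono_null (by rintro _ ⟨x, hx, rfl⟩; exact hx.1) hA'0
    rw [himg] at hcov
    have hgmeas : Measurable fun x : ℝ =>
        ENNReal.ofReal |Polynomial.eval x (Polynomial.derivative q)| :=
      ENNReal.measurable_ofReal.comp ((Polynomial.continuous _).abs.measurable)
    have hae := (lintegral_eq_zero_iff hgmeas).mp hcov
    rw [Filter.EventuallyEq, ae_restrict_iff' hsm] at hae
    rw [ae_iff] at hae
    refine measure_mono_null (fun x hx => ?_) hae
    simp only [Set.mem_setOf_eq]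
    push_neg
    refine ⟨hx, ?_⟩
    have hxZ : x ∉ Z := fun h =>
      (Set.eq_empty_iff_forall_notMem.mp hab x) ⟨hsub hx, h⟩
    simp only [hZdef, Set.mem_setOf_eq] at hxZ
    simp [ENNReal.ofReal_eq_zero, not_le, abs_pos, hxZ]
  have hcover : {t : ℝ | Polynomial.eval t q ∈ A} ⊆
      Z ∪ ⋃ r : ℚ × ℚ, ({t : ℝ | Polynomial.eval t q ∈ A'} ∩ Set.Ioo (r.1 : ℝ) r.2 ∩
        {_t : ℝ | Set.Ioo ((r.1 : ℝ)) r.2 ∩ Z = ∅}) := by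
    intro t ht
    by_cases htZ : t ∈ Z
    · exact Or.inl htZ
    · refine Or.inr ?_
      have hZc : IsOpen Zᶜ := (hZfin.isClosed).isOpen_compl
      obtain ⟨ε, hε, hball⟩ := Metric.isOpen_iff.mp hZc t htZ
      rw [Real.ball_eq_Ioo] at hball
      obtain ⟨a, ha1, ha2⟩ := exists_rat_btwn (show t - ε < t by linarith)
      obtain ⟨b, hb1, hb2⟩ := exists_rat_btwn (show t < t + ε by linarith)
      refine Set.mem_iUnion.mpr ⟨(a, b), ⟨⟨hAA' ht, ha2, hb1⟩, ?_⟩⟩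
      rw [Set.eq_empty_iff_forall_notMem]
      rintro u ⟨hu1, hu2⟩
      exact hball ⟨lt_trans ha1 hu1.1, lt_trans hu1.2 hb2⟩ hu2
  refine measure_mono_null hcover (measure_union_null (hZfin.measure_zero _)
    (measure_iUnion_null fun r => ?_))
  by_cases hr : Set.Ioo ((r.1 : ℝ)) r.2 ∩ Z = ∅
  · exact measure_mono_null Set.inter_subset_left (key r.1 r.2 hr)
  · refine measure_mono_null (fun t ht => absurd ht.2 ?_) (measure_empty (μ := volume))
    simp [hr]

lemma cont_consmap {n : ℕ} :
    Continuous (fun z : (Fin n → ℝ) × ℝ => (Fin.cons z.2 z.1 : Fin (n + 1) → ℝ)) := by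
  apply continuous_pi
  intro i
  refine Fin.cases ?_ ?_ i
  · simpa using (continuous_snd : Continuous fun z : (Fin n → ℝ) × ℝ => z.2)
  · intro j
    simpa [Function.comp_def] using ((continuous_apply j).comp
      (continuous_fst : Continuous fun z : (Fin n → ℝ) × ℝ => z.1))

lemma fubini_null {n : ℕ} {T : Set ((Fin n → ℝ) × ℝ)} (hT : MeasurableSet T)
    (h : ∀ᵐ y : Fin n → ℝ, volume {t : ℝ | (y, t) ∈ T} = 0) :
    volume {x : Fin (n + 1) → ℝ | (Fin.tail x, x 0) ∈ T} = 0 := by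
  have e1 := volume_preserving_piFinSuccAbove (fun _ : Fin (n + 1) => ℝ) 0
  have e2 : MeasurePreserving (Prod.swap : ℝ × (Fin n → ℝ) → (Fin n → ℝ) × ℝ)
      volume ((volume : Measure (Fin n → ℝ)).prod (volume : Measure ℝ)) := by
    rw [Measure.volume_eq_prod]
    exact Measure.measurePreserving_swap
  have hcomp := e2.comp e1
  have hfun : (Prod.swap ∘ (MeasurableEquiv.piFinSuccAbove (fun _ : Fin (n + 1) => ℝ) 0)) =
      fun x : Fin (n + 1) → ℝ => (Fin.tail x, x 0) := by
    funext x
    simp [MeasurableEquiv.piFinSuccAbove, Fin.removeNth_zero, Prod.swap]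
  rw [hfun] at hcomp
  have hpre := hcomp.measure_preimage hT.nullMeasurableSet
  have hT0 : ((volume : Measure (Fin n → ℝ)).prod (volume : Measure ℝ)) T = 0 := by
    rw [Measure.measure_prod_null hT]
    filter_upwards [h] with y hy
    exact hy
  rw [hT0] at hpre
  exact hpre

lemma mv_zero_null : ∀ {n : ℕ} (p : MvPolynomial (Fin n) ℝ), p ≠ 0 →
    volume {x : Fin n → ℝ | MvPolynomial.eval x p = 0} = 0 := by
  intro n
  induction n with
  | zero =>
    intro p hp
    obtain ⟨c, rfl⟩ := MvPolynomial.C_surjective (Fin 0) p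
    have hc : c ≠ 0 := fun h => hp (by rw [h, map_zero])
    have : {x : Fin 0 → ℝ | MvPolynomial.eval x (MvPolynomial.C c) = 0} = ∅ := by
      rw [Set.eq_empty_iff_forall_notMem]
      intro x hx
      simp only [Set.mem_setOf_eq, MvPolynomial.eval_C] at hx
      exact hc hx
    rw [this, measure_empty]
  | succ n ih =>
    intro p hp
    set q := MvPolynomial.finSuccEquiv ℝ n p with hqdef
    have hq : q ≠ 0 := by
      intro h
      exact hp (by simpa [hqdef] using (map_eq_zero_iff _
        (MvPolynomial.finSuccEquiv ℝ n).injective).mp h)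
    have hlc : q.leadingCoeff ≠ 0 := Polynomial.leadingCoeff_ne_zero.mpr hq
    set T : Set ((Fin n → ℝ) × ℝ) :=
      {z | MvPolynomial.eval (Fin.cons z.2 z.1 : Fin (n + 1) → ℝ) p = 0} with hTdef
    have hTm : MeasurableSet T := by
      have : Continuous fun z : (Fin n → ℝ) × ℝ =>
          MvPolynomial.eval (Fin.cons z.2 z.1 : Fin (n + 1) → ℝ) p :=
        (MvPolynomial.continuous_eval p).comp cont_consmap
      exact this.measurable (measurableSet_singleton 0)
    have hsec : ∀ᵐ y : Fin n → ℝ, volume {t : ℝ | (y, t) ∈ T} = 0 := by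
      have hcompl := ih q.leadingCoeff hlc
      rw [← compl_mem_ae_iff] at hcompl
      filter_upwards [hcompl] with y hy
      simp only [Set.mem_compl_iff, Set.mem_setOf_eq] at hy
      have hqy : Polynomial.map (MvPolynomial.eval y) q ≠ 0 := by
        intro h
        apply hy
        have h2 : MvPolynomial.eval y (q.coeff q.natDegree) = 0 := by
          rw [← Polynomial.coeff_map, h, Polynomial.coeff_zero]
        rw [Polynomial.leadingCoeff]
        exact h2
      have hfin : Set.Finite {t : ℝ | (y, t) ∈ T} := by
        have : {t : ℝ | (y, t) ∈ T} =
            {t : ℝ | Polynomial.IsRoot (Polynomial.map (MvPolynomial.eval y) q) t} := by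
          ext t
          simp only [hTdef, Set.mem_setOf_eq, Polynomial.IsRoot]
          rw [MvPolynomial.eval_eq_eval_mv_eval']
        rw [this]
        exact Polynomial.finite_setOf_isRoot hqy
      exact hfin.measure_zero _
    have := fubini_null hTm hsec
    have hset : {x : Fin (n + 1) → ℝ | MvPolynomial.eval x p = 0} =
        {x : Fin (n + 1) → ℝ | (Fin.tail x, x 0) ∈ T} := by
      ext x
      simp only [Set.mem_setOf_eq, hTdef, Fin.cons_self_tail]
    rw [hset]
    exact this
lemma mv_preimage_null : ∀ {n : ℕ} (p : MvPolynomial (Fin n) ℝ),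
    (¬ ∃ c : ℝ, ∀ x : Fin n → ℝ, MvPolynomial.eval x p = c) →
    ∀ {A : Set ℝ}, volume A = 0 →
    volume {x : Fin n → ℝ | MvPolynomial.eval x p ∈ A} = 0 := by
  intro n
  induction n with
  | zero =>
    intro p hp A hA
    exact absurd ⟨MvPolynomial.eval (fun i => i.elim0) p,
      fun x => by rw [Subsingleton.elim x (fun i => i.elim0)]⟩ hp
  | succ n ih =>
    intro p hp A hA
    obtain ⟨A', hAA', hA'm, hA'0⟩ : ∃ A', A ⊆ A' ∧ MeasurableSet A' ∧ volume A' = 0 :=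
      ⟨toMeasurable volume A, subset_toMeasurable _ _, measurableSet_toMeasurable _ _, by
        rwa [measure_toMeasurable]⟩
    have hp0 : p ≠ 0 := fun h => hp ⟨0, fun x => by rw [h, map_zero]⟩
    set q := MvPolynomial.finSuccEquiv ℝ n p with hqdef
    have hq : q ≠ 0 := by
      intro h
      exact hp0 ((map_eq_zero_iff _ (MvPolynomial.finSuccEquiv ℝ n).injective).mp h)
    set T : Set ((Fin n → ℝ) × ℝ) :=
      {z | MvPolynomial.eval (Fin.cons z.2 z.1 : Fin (n + 1) → ℝ) p ∈ A'} with hTdef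
    have hTm : MeasurableSet T := by
      have : Continuous fun z : (Fin n → ℝ) × ℝ =>
          MvPolynomial.eval (Fin.cons z.2 z.1 : Fin (n + 1) → ℝ) p :=
        (MvPolynomial.continuous_eval p).comp cont_consmap
      exact this.measurable hA'm
    have hsec : ∀ᵐ y : Fin n → ℝ, volume {t : ℝ | (y, t) ∈ T} = 0 := by
      by_cases hdeg : q.natDegree = 0
      · -- q is constant in the first variable
        obtain ⟨c0, hc0⟩ := Polynomial.natDegree_eq_zero.mp hdeg
        have heval : ∀ (t : ℝ) (y : Fin n → ℝ),
            MvPolynomial.eval (Fin.cons t y : Fin (n + 1) → ℝ) p = MvPolynomial.eval y c0 := by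
          intro t y
          rw [MvPolynomial.eval_eq_eval_mv_eval', ← hqdef, ← hc0, Polynomial.map_C,
            Polynomial.eval_C]
        have hc0nc : ¬ ∃ c : ℝ, ∀ y : Fin n → ℝ, MvPolynomial.eval y c0 = c := by
          rintro ⟨c, hc⟩
          exact hp ⟨c, fun x => by
            rw [← Fin.cons_self_tail x, heval, hc]⟩
        have hN := ih c0 hc0nc hA'0
        rw [← compl_mem_ae_iff] at hN
        filter_upwards [hN] with y hy
        simp only [Set.mem_compl_iff, Set.mem_setOf_eq] at hy
        have : {t : ℝ | (y, t) ∈ T} = ∅ := by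
          rw [Set.eq_empty_iff_forall_notMem]
          intro t ht
          simp only [hTdef, Set.mem_setOf_eq, heval] at ht
          exact hy ht
        rw [this, measure_empty]
      · -- q has positive degree in the first variable
        have hlc : q.leadingCoeff ≠ 0 := Polynomial.leadingCoeff_ne_zero.mpr hq
        have hcompl := mv_zero_null q.leadingCoeff hlc
        rw [← compl_mem_ae_iff] at hcompl
        filter_upwards [hcompl] with y hy
        simp only [Set.mem_compl_iff, Set.mem_setOf_eq] at hy
        set qy := Polynomial.map (MvPolynomial.eval y) q with hqydef
        have hcoeff : qy.coeff q.natDegree ≠ 0 := by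
          rw [hqydef, Polynomial.coeff_map]
          exact hy
        have hdy : Polynomial.derivative qy ≠ 0 := by
          intro h
          have h1 : qy.natDegree = 0 := Polynomial.natDegree_eq_zero_of_derivative_eq_zero h
          have h2 : q.natDegree ≤ qy.natDegree := Polynomial.le_natDegree_of_ne_zero hcoeff
          omega
        have h1d := poly1d_preimage_null qy hdy hA'0
        have : {t : ℝ | (y, t) ∈ T} = {t : ℝ | Polynomial.eval t qy ∈ A'} := by
          ext t
          simp only [hTdef, Set.mem_setOf_eq]
          rw [MvPolynomial.eval_eq_eval_mv_eval', ← hqdef, ← hqydef]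
        rw [this]
        exact h1d
    have hmain := fubini_null hTm hsec
    refine measure_mono_null (fun x hx => ?_) hmain
    simp only [Set.mem_setOf_eq, hTdef, Fin.cons_self_tail]
    exact hAA' hx

/-- A non-constant polynomial of finitely many jointly Gaussian variables has an
absolutely continuous law: the pushforward of the standard Gaussian measure on `ℝ^n`
by a non-constant polynomial map is absolutely continuous with respect to Lebesgue
measure on `ℝ`. -/
theorem gaussian_map_polynomial_absolutelyContinuous {n : ℕ}
    (γ : Measure (Fin n → ℝ))
    (hγ : γ = volume.withDensity fun x =>
      ENNReal.ofReal ((2 * Real.pi) ^ (-(n : ℝ) / 2) * Real.exp (-(∑ i, x i ^ 2) / 2)))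
    (p : MvPolynomial (Fin n) ℝ)
    (hp : ¬ ∃ c : ℝ, ∀ x : Fin n → ℝ, MvPolynomial.eval x p = c) :
    γ.map (fun x => MvPolynomial.eval x p) ≪ volume := by
  have hmeas : Measurable fun x : Fin n → ℝ => MvPolynomial.eval x p :=
    (MvPolynomial.continuous_eval p).measurable
  have hγv : γ ≪ (volume : Measure (Fin n → ℝ)) := by
    rw [hγ]
    exact withDensity_absolutelyContinuous _ _
  refine (hγv.map hmeas).trans (Measure.AbsolutelyContinuous.mk fun A hAm hA0 => ?_)
  rw [Measure.map_apply hmeas hAm]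
  exact mv_preimage_null p hp hA0
end

section
/- Let T > 0, α ∈ (1/2, 1], C ≥ 0, and let f : AddCircle T → ℂ satisfy ‖f(x) − f(y)‖ ≤ C · dist(x, y)^α for all x, y. Then the symmetric partial sums of the Fourier series of f converge uniformly to f: sup_{x ∈ AddCircle T} ‖Σ_{k=−n}^{n} fourierCoeff f k · e^{2πikx/T} − f(x)‖ → 0 as n → ∞. (One-dimensional case of the uniform convergence of Fourier partial sums of Hölder continuous functions on the torus.) -/
open MeasureTheory Filter Topology

section AuxBernstein

open MeasureTheory AddCircle

variable {T : ℝ} [hT : Fact (0 < T)]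

lemma fourier_pt_add {n : ℤ} (x y : AddCircle T) :
    fourier n (x + y) = fourier n x * fourier n y := by
  simp only [fourier_apply, smul_add, AddCircle.toCircle_add, Circle.coe_mul]

lemma aux_shift (f : AddCircle T → ℂ) (h : AddCircle T) (n : ℤ) :
    fourierCoeff (fun x => f (x + h)) n = fourier n h * fourierCoeff f n := by
  have h2 : (fourier n) h * fourier (-n) h = 1 := by
    rw [← fourier_add]; simp
  calc fourierCoeff (fun x => f (x + h)) n
      = ∫ t, fourier n h • ((fourier (-n)) (t + h) • f (t + h)) ∂haarAddCircle := by
        unfold fourierCoeff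
        congr 1
        funext t
        simp only [smul_eq_mul, fourier_pt_add]
        calc (fourier (-n)) t * f (t + h)
            = ((fourier n) h * (fourier (-n)) h) * ((fourier (-n)) t * f (t + h)) := by
              rw [h2]; ring
          _ = (fourier n) h * ((fourier (-n)) t * (fourier (-n)) h * f (t + h)) := by ring
    _ = fourier n h • ∫ t, (fourier (-n)) (t + h) • f (t + h) ∂haarAddCircle :=
        integral_smul _ _
    _ = fourier n h * fourierCoeff f n := by
        rw [integral_add_right_eq_self (μ := haarAddCircle) (fun t => fourier (-n) t • f t) h]
        rfl

lemma aux_sub (f : AddCircle T → ℂ) (hf : Continuous f) (h : AddCircle T) (n : ℤ) :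
    fourierCoeff (fun x => f (x + h) - f x) n = (fourier n h - 1) * fourierCoeff f n := by
  have i1 : Integrable (fun t : AddCircle T => fourier (-n) t • f (t + h)) haarAddCircle := by
    refine Continuous.integrable_of_hasCompactSupport ?_ (HasCompactSupport.of_compactSpace _)
    exact ((fourier (-n)).continuous).smul (hf.comp (by continuity))
  have i2 : Integrable (fun t : AddCircle T => fourier (-n) t • f t) haarAddCircle := by
    refine Continuous.integrable_of_hasCompactSupport ?_ (HasCompactSupport.of_compactSpace _)
    exact ((fourier (-n)).continuous).smul hf
  have : fourierCoeff (fun x => f (x + h) - f x) n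
      = fourierCoeff (fun x => f (x + h)) n - fourierCoeff f n := by
    unfold fourierCoeff
    rw [← integral_sub i1 i2]
    congr 1; funext t; simp only [smul_eq_mul]; ring
  rw [this, aux_shift f h n]; ring

-- Bessel-type bound: for any continuous g and finset s,
lemma aux_bessel (g : AddCircle T → ℂ) (hg : Continuous g) (b : ℝ) (hb : 0 ≤ b)
    (hbd : ∀ x, ‖g x‖ ≤ b) (s : Finset ℤ) :
    ∑ k ∈ s, ‖fourierCoeff g k‖ ^ 2 ≤ b ^ 2 := by
  set gC : C(AddCircle T, ℂ) := ⟨g, hg⟩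
  set G : Lp ℂ 2 (haarAddCircle (T := T)) := ContinuousMap.toLp 2 haarAddCircle ℂ gC
  have key : ∀ k : ℤ, (inner ℂ (fourierLp 2 k) G : ℂ) = fourierCoeff g k := by
    intro k
    have h1 := fourierBasis_repr G k
    rwa [HilbertBasis.repr_apply_apply, coe_fourierBasis, fourierCoeff_toLp gC k] at h1
  have bessel := Orthonormal.sum_inner_products_le (𝕜 := ℂ) G
    (orthonormal_fourier (T := T)) (s := s)
  simp_rw [key] at bessel
  refine bessel.trans ?_
  have hnorm : ‖G‖ ≤ b := by
    have hae : (G : AddCircle T → ℂ) =ᵐ[haarAddCircle] g := ContinuousMap.coeFn_toLp _ gC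
    rw [Lp.norm_def, eLpNorm_congr_ae hae]
    refine ENNReal.toReal_le_of_le_ofReal hb ?_
    have := eLpNorm_le_of_ae_bound (μ := haarAddCircle (T := T)) (p := 2) (f := g)
      (Filter.Eventually.of_forall hbd)
    simpa using this
  exact pow_le_pow_left₀ (norm_nonneg _) hnorm 2

lemma aux_lower (m : ℕ) (k : ℤ) (h1 : 2 ^ m ≤ k.natAbs) (h2 : k.natAbs < 2 ^ (m + 1)) :
    (2 : ℝ) ≤ ‖fourier k (((T / 2 ^ (m + 2) : ℝ)) : AddCircle T) - 1‖ ^ 2 := by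
  have hT0 : (0:ℝ) < T := hT.out
  set θ : ℝ := Real.pi * k / 2 ^ (m + 1) with hθ
  have hfour : fourier k (((T / 2 ^ (m + 2) : ℝ)) : AddCircle T) = Complex.exp (θ * Complex.I) := by
    rw [fourier_coe_apply]
    congr 1
    have : (T : ℂ) ≠ 0 := Complex.ofReal_ne_zero.mpr hT0.ne'
    rw [hθ]
    push_cast
    field_simp
    ring
  have hnorm : ‖Complex.exp (θ * Complex.I) - 1‖ ^ 2 = 2 - 2 * Real.cos θ := by
    rw [Complex.exp_mul_I]
    have : Complex.cos θ + Complex.sin θ * Complex.I - 1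
        = Complex.ofReal (Real.cos θ - 1) + Complex.ofReal (Real.sin θ) * Complex.I := by
      push_cast; ring
    rw [this, Complex.sq_norm, Complex.normSq_add_mul_I]
    nlinarith [Real.sin_sq_add_cos_sq θ]
  have hcos : Real.cos θ ≤ 0 := by
    rw [← Real.cos_abs]
    have habs : |θ| = Real.pi * k.natAbs / 2 ^ (m + 1) := by
      rw [hθ, abs_div, abs_mul, abs_of_pos Real.pi_pos, abs_of_pos (by positivity : (0:ℝ) < 2 ^ (m+1))]
      rw [Nat.cast_natAbs]
      push_cast
      ring
    apply Real.cos_nonpos_of_pi_div_two_le_of_le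
    · rw [habs]
      rw [le_div_iff₀ (by positivity)]
      have : ((2:ℝ) ^ m) ≤ (k.natAbs : ℝ) := by exact_mod_cast h1
      calc Real.pi / 2 * 2 ^ (m+1) = Real.pi * 2 ^ m := by ring
        _ ≤ Real.pi * k.natAbs := by nlinarith [Real.pi_pos]
    · rw [habs, div_le_iff₀ (by positivity)]
      have : (k.natAbs : ℝ) ≤ 2 ^ (m+1) := by exact_mod_cast h2.le
      nlinarith [Real.pi_pos]
  rw [hfour, hnorm]
  linarith

lemma aux_block_sq (f : AddCircle T → ℂ) (hcont : Continuous f) (C α : ℝ) (hC : 0 ≤ C)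
    (hα : 0 < α) (hf : ∀ x y : AddCircle T, ‖f x - f y‖ ≤ C * dist x y ^ α)
    (m : ℕ) (s : Finset ℤ) (hs : ∀ k ∈ s, 2 ^ m ≤ k.natAbs ∧ k.natAbs < 2 ^ (m + 1)) :
    ∑ k ∈ s, ‖fourierCoeff f k‖ ^ 2 ≤ (C * (T / 2 ^ (m + 2)) ^ α) ^ 2 / 2 := by
  have hT0 : (0:ℝ) < T := hT.out
  set h : ℝ := T / 2 ^ (m + 2) with hh
  have hh0 : 0 < h := by positivity
  set hA : AddCircle T := (h : AddCircle T) with hhA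
  set g : AddCircle T → ℂ := fun x => f (x + hA) - f x with hg
  have hgcont : Continuous g := by
    exact (hcont.comp (by continuity)).sub hcont
  set b : ℝ := C * h ^ α with hb
  have hb0 : 0 ≤ b := by positivity
  have hgb : ∀ x, ‖g x‖ ≤ b := by
    intro x
    refine (hf _ _).trans ?_
    have hdist : dist (x + hA) x = ‖hA‖ := by
      rw [dist_eq_norm, add_sub_cancel_left]
    have hnA : ‖hA‖ ≤ h := by
      have := QuotientAddGroup.norm_mk_le_norm (S := AddSubgroup.zmultiples T) (m := h)
      simpa [abs_of_pos hh0] using this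
    rw [hdist, hb]
    exact mul_le_mul_of_nonneg_left
      (Real.rpow_le_rpow (norm_nonneg _) hnA hα.le) hC
  have hbes := aux_bessel g hgcont b hb0 hgb s
  have hlow : ∀ k ∈ s, 2 * ‖fourierCoeff f k‖ ^ 2 ≤ ‖fourierCoeff g k‖ ^ 2 := by
    intro k hk
    rw [hg, aux_sub f hcont hA k, norm_mul, mul_pow]
    exact mul_le_mul_of_nonneg_right (aux_lower m k (hs k hk).1 (hs k hk).2)
      (by positivity)
  have h2 : 2 * ∑ k ∈ s, ‖fourierCoeff f k‖ ^ 2 ≤ b ^ 2 := by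
    rw [Finset.mul_sum]
    exact (Finset.sum_le_sum hlow).trans hbes
  linarith

lemma aux_block_sum (f : AddCircle T → ℂ) (hcont : Continuous f) (C α : ℝ) (hC : 0 ≤ C)
    (hα : 0 < α) (hf : ∀ x y : AddCircle T, ‖f x - f y‖ ≤ C * dist x y ^ α)
    (m : ℕ) (s : Finset ℤ)
    (hs : ∀ k ∈ s, 2 ^ m ≤ k.natAbs ∧ k.natAbs < 2 ^ (m + 1))
    (hcard : (s.card : ℝ) ≤ 2 ^ (m + 3)) :
    ∑ k ∈ s, ‖fourierCoeff f k‖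
      ≤ (C * T ^ α) * ((2:ℝ) ^ ((1:ℝ)/2 - α)) ^ (m + 2) := by
  have hT0 : (0:ℝ) < T := hT.out
  set K : ℝ := C * T ^ α with hK
  set r : ℝ := (2:ℝ) ^ ((1:ℝ)/2 - α) with hr
  have hr0 : 0 < r := Real.rpow_pos_of_pos two_pos _
  have hK0 : 0 ≤ K := by positivity
  have hsq : (∑ k ∈ s, ‖fourierCoeff f k‖) ^ 2 ≤ (K * r ^ (m + 2)) ^ 2 := by
    calc (∑ k ∈ s, ‖fourierCoeff f k‖) ^ 2
        ≤ (s.card : ℝ) * ∑ k ∈ s, ‖fourierCoeff f k‖ ^ 2 := sq_sum_le_card_mul_sum_sq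
      _ ≤ 2 ^ (m + 3) * ((C * (T / 2 ^ (m + 2)) ^ α) ^ 2 / 2) := by
          apply mul_le_mul hcard (aux_block_sq f hcont C α hC hα hf m s hs)
            (Finset.sum_nonneg fun k _ => by positivity) (by positivity)
      _ = (K * r ^ (m + 2)) ^ 2 := by
          have e1 : ((2:ℝ) ^ (m + 2) : ℝ) = (2:ℝ) ^ ((m:ℝ) + 2) := by
            rw [← Real.rpow_natCast 2 (m + 2)]; norm_num
          have e3 : ((2:ℝ) ^ (m + 3) : ℝ) = 2 * (2:ℝ) ^ ((m:ℝ) + 2) := by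
            rw [← e1]; ring
          have hdiv : (T / 2 ^ (m + 2) : ℝ) ^ α = T ^ α / ((2:ℝ) ^ ((m:ℝ)+2)) ^ α := by
            rw [Real.div_rpow hT0.le (by positivity), e1]
          have hrp : r ^ (m + 2) = (2:ℝ) ^ (((1:ℝ)/2 - α) * ((m:ℝ) + 2)) := by
            rw [hr, ← Real.rpow_natCast ((2:ℝ) ^ ((1:ℝ)/2 - α)) (m + 2),
              ← Real.rpow_mul (by norm_num)]
            norm_num
          have hQα : ((2:ℝ) ^ ((m:ℝ)+2)) ^ α = (2:ℝ) ^ (((m:ℝ)+2) * α) := by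
            rw [← Real.rpow_mul (by norm_num)]
          have hBA : ((2:ℝ) ^ (((1:ℝ)/2 - α) * ((m:ℝ)+2))) ^ 2
              * ((2:ℝ) ^ (((m:ℝ)+2) * α)) ^ 2 = (2:ℝ) ^ ((m:ℝ) + 2) := by
            rw [← Real.rpow_natCast ((2:ℝ) ^ (((1:ℝ)/2 - α) * ((m:ℝ)+2))) 2,
              ← Real.rpow_natCast ((2:ℝ) ^ (((m:ℝ)+2) * α)) 2,
              ← Real.rpow_mul (by norm_num), ← Real.rpow_mul (by norm_num),
              ← Real.rpow_add two_pos]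
            congr 1
            push_cast
            ring
          have hA0 : ((2:ℝ) ^ (((m:ℝ)+2) * α)) ≠ 0 := (Real.rpow_pos_of_pos two_pos _).ne'
          rw [hdiv, hQα, hrp, hK, e3]
          have hstep : 2 * (2:ℝ)^((m:ℝ)+2) * ((C * (T ^ α / (2:ℝ)^(((m:ℝ)+2)*α)))^2 / 2)
              = (2:ℝ)^((m:ℝ)+2) * C^2 * (T ^ α)^2 / ((2:ℝ)^(((m:ℝ)+2)*α))^2 := by ring
          rw [hstep, div_eq_iff (pow_ne_zero 2 hA0)]
          linear_combination -((C:ℝ)^2 * (T^α)^2) * hBA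
  exact (pow_le_pow_iff_left₀ (Finset.sum_nonneg fun k _ => norm_nonneg _)
    (by positivity) two_ne_zero).mp hsq

lemma aux_summable (f : AddCircle T → ℂ) (hcont : Continuous f) (C α : ℝ) (hC : 0 ≤ C)
    (hα : α ∈ Set.Ioc (1 / 2 : ℝ) 1)
    (hf : ∀ x y : AddCircle T, ‖f x - f y‖ ≤ C * dist x y ^ α) :
    Summable (fourierCoeff f) := by
  have hT0 : (0:ℝ) < T := hT.out
  have hα0 : 0 < α := lt_trans (by norm_num) hα.1
  set a : ℤ → ℝ := fun k => ‖fourierCoeff f k‖ with ha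
  set K : ℝ := C * T ^ α with hK
  set r : ℝ := (2:ℝ) ^ ((1:ℝ)/2 - α) with hr
  have hr0 : 0 < r := Real.rpow_pos_of_pos two_pos _
  have hr1 : r < 1 := Real.rpow_lt_one_of_one_lt_of_neg one_lt_two (by linarith [hα.1])
  have hK0 : 0 ≤ K := by positivity
  -- the dyadic blocks
  set blockF : ℕ → Finset ℤ := fun m =>
    (Finset.Icc (-(2 ^ (m+1) : ℤ)) (2 ^ (m+1))).filter
      (fun k => 2 ^ m ≤ k.natAbs ∧ k.natAbs < 2 ^ (m + 1)) with hblock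
  have hblock_sum : ∀ m : ℕ, ∑ k ∈ blockF m, a k ≤ K * r ^ (m + 2) := by
    intro m
    apply aux_block_sum f hcont C α hC hα0 hf m
    · intro k hk
      exact (Finset.mem_filter.mp hk).2
    · have h1 : (blockF m).card ≤ (Finset.Icc (-(2 ^ (m+1) : ℤ)) (2 ^ (m+1))).card :=
        Finset.card_le_card (Finset.filter_subset _ _)
      have h2 : (Finset.Icc (-(2 ^ (m+1) : ℤ)) (2 ^ (m+1))).card = 2 ^ (m + 2) + 1 := by
        rw [Int.card_Icc]
        have : (2 ^ (m+1) : ℤ) + 1 - -(2 ^ (m+1)) = 2 ^ (m + 2) + 1 := by ring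
        rw [this]
        norm_cast
      have h3 : (blockF m).card ≤ 2 ^ (m + 3) := by
        rw [h2] at h1
        calc (blockF m).card ≤ 2 ^ (m+2) + 1 := h1
          _ ≤ 2 ^ (m + 3) := by
            have : (1:ℕ) ≤ 2 ^ (m+2) := Nat.one_le_two_pow
            calc 2 ^ (m+2) + 1 ≤ 2 ^ (m+2) + 2 ^ (m+2) := by omega
              _ = 2 ^ (m+3) := by ring
      calc ((blockF m).card : ℝ) ≤ ((2:ℕ) ^ (m + 3) : ℕ) := by exact_mod_cast h3
        _ = 2 ^ (m + 3) := by push_cast; ring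
  -- uniform bound on finite partial sums
  have hbound : ∀ u : Finset ℤ, ∑ k ∈ u, a k ≤ a 0 + K * (1 - r)⁻¹ := by
    intro u
    set N : ℕ := (u.sup fun k => k.natAbs) + 1 with hN
    have hsub : u ⊆ insert 0 ((Finset.range N).biUnion blockF) := by
      intro k hk
      rcases eq_or_ne k 0 with rfl | hk0
      · exact Finset.mem_insert_self _ _
      apply Finset.mem_insert_of_mem
      set m : ℕ := Nat.log 2 k.natAbs with hm
      have hk1 : 2 ^ m ≤ k.natAbs := Nat.pow_log_le_self 2 (Int.natAbs_ne_zero.mpr hk0)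
      have hk2 : k.natAbs < 2 ^ (m + 1) := Nat.lt_pow_succ_log_self one_lt_two _
      apply Finset.mem_biUnion.mpr
      refine ⟨m, ?_, ?_⟩
      · apply Finset.mem_range.mpr
        have : m < 2 ^ m := Nat.lt_two_pow_self
        have h4 : k.natAbs ≤ u.sup (fun k => k.natAbs) := Finset.le_sup hk
        omega
      · apply Finset.mem_filter.mpr
        refine ⟨?_, hk1, hk2⟩
        rw [Finset.mem_Icc]
        have habs : |k| ≤ (2 ^ (m+1) : ℤ) := by
          rw [Int.abs_eq_natAbs]
          exact_mod_cast hk2.le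
        exact abs_le.mp habs
    have hdisj : (↑(Finset.range N) : Set ℕ).PairwiseDisjoint blockF := by
      intro i _ j _ hij
      apply Finset.disjoint_left.mpr
      intro k hki hkj
      have h1 := (Finset.mem_filter.mp hki).2
      have h2 := (Finset.mem_filter.mp hkj).2
      rcases Nat.lt_or_ge i j with h | h
      · exact absurd h1.1 (by
          have : (2:ℕ) ^ (i + 1) ≤ 2 ^ j := Nat.pow_le_pow_right (by norm_num) h
          omega)
      rcases Nat.lt_or_ge j i with h' | h'
      · exact absurd h2.1 (by
          have : (2:ℕ) ^ (j + 1) ≤ 2 ^ i := Nat.pow_le_pow_right (by norm_num) h'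
          omega)
      exact hij (by omega)
    have h0notin : (0:ℤ) ∉ (Finset.range N).biUnion blockF := by
      intro h0
      obtain ⟨m, _, hm⟩ := Finset.mem_biUnion.mp h0
      have := (Finset.mem_filter.mp hm).2.1
      simp at this
    calc ∑ k ∈ u, a k ≤ ∑ k ∈ insert 0 ((Finset.range N).biUnion blockF), a k :=
          Finset.sum_le_sum_of_subset_of_nonneg hsub (fun k _ _ => norm_nonneg _)
      _ = a 0 + ∑ k ∈ (Finset.range N).biUnion blockF, a k := Finset.sum_insert h0notin
      _ = a 0 + ∑ m ∈ Finset.range N, ∑ k ∈ blockF m, a k := by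
          rw [Finset.sum_biUnion hdisj]
      _ ≤ a 0 + ∑ m ∈ Finset.range N, K * r ^ m := by
          apply add_le_add_right
          apply Finset.sum_le_sum
          intro m _
          refine (hblock_sum m).trans ?_
          exact mul_le_mul_of_nonneg_left
            (pow_le_pow_of_le_one hr0.le hr1.le (by omega)) hK0
      _ ≤ a 0 + K * (1 - r)⁻¹ := by
          apply add_le_add_right
          rw [← Finset.mul_sum]
          refine mul_le_mul_of_nonneg_left ?_ hK0
          calc ∑ m ∈ Finset.range N, r ^ m
              ≤ ∑' m : ℕ, r ^ m :=
                Summable.sum_le_tsum _ (fun m _ => by positivity)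
                  (summable_geometric_of_lt_one hr0.le hr1)
            _ = (1 - r)⁻¹ := tsum_geometric_of_lt_one hr0.le hr1
  exact Summable.of_norm (summable_of_sum_le (fun k => norm_nonneg _) hbound)

lemma aux_continuous (f : AddCircle T → ℂ) (C α : ℝ) (hC : 0 ≤ C) (hα0 : 0 < α) (hα1 : α ≤ 1)
    (hf : ∀ x y : AddCircle T, ‖f x - f y‖ ≤ C * dist x y ^ α) : Continuous f := by
  have hH : HolderWith C.toNNReal α.toNNReal f := by
    intro x y
    rw [edist_dist, edist_dist]
    calc ENNReal.ofReal (dist (f x) (f y))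
        ≤ ENNReal.ofReal (C * dist x y ^ α) := by
          apply ENNReal.ofReal_le_ofReal
          rw [dist_eq_norm]; exact hf x y
      _ = ENNReal.ofReal C * ENNReal.ofReal (dist x y ^ α) := ENNReal.ofReal_mul hC
      _ = (C.toNNReal : ENNReal) * ENNReal.ofReal (dist x y) ^ (α.toNNReal : ℝ) := by
          rw [show ((α.toNNReal : ℝ)) = α from Real.coe_toNNReal α hα0.le,
            ENNReal.ofReal_rpow_of_nonneg dist_nonneg hα0.le]
          rfl
  exact hH.continuous (by simpa using hα0)

theorem fourier_partial_sums_tendstoUniformly' (T : ℝ) [hT : Fact (0 < T)]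
    (α C : ℝ) (hα : α ∈ Set.Ioc (1 / 2 : ℝ) 1) (hC : 0 ≤ C)
    (f : AddCircle T → ℂ)
    (hf : ∀ x y : AddCircle T, ‖f x - f y‖ ≤ C * dist x y ^ α) :
    TendstoUniformly
      (fun (n : ℕ) (x : AddCircle T) =>
        ∑ k ∈ Finset.Icc (-(n : ℤ)) (n : ℤ), fourierCoeff f k * fourier k x)
      f Filter.atTop := by
  have hα0 : 0 < α := lt_trans (by norm_num) hα.1
  have hcont : Continuous f := aux_continuous f C α hC hα0 hα.2 hf
  set F : C(AddCircle T, ℂ) := ⟨f, hcont⟩ with hF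
  have hsummable : Summable (fourierCoeff (F : AddCircle T → ℂ)) :=
    aux_summable f hcont C α hC hα hf
  have hsum : HasSum (fun i => fourierCoeff (F : AddCircle T → ℂ) i • fourier i) F :=
    hasSum_fourier_series_of_summable hsummable
  have hmono : Monotone (fun n : ℕ => Finset.Icc (-(n:ℤ)) (n:ℤ)) := by
    intro i j hij
    apply Finset.Icc_subset_Icc <;> simp <;> exact_mod_cast hij
  have hexh : ∀ k : ℤ, ∃ n : ℕ, k ∈ Finset.Icc (-(n:ℤ)) (n:ℤ) := by
    intro k
    exact ⟨k.natAbs, by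
      rw [Finset.mem_Icc]
      constructor
      · rw [neg_le]
        exact (Int.le_natAbs).trans_eq (Int.natAbs_neg k ▸ rfl)
      · exact Int.le_natAbs⟩
  have htendsto : Filter.Tendsto (fun n : ℕ => Finset.Icc (-(n:ℤ)) (n:ℤ))
      Filter.atTop Filter.atTop := Filter.tendsto_atTop_finset_of_monotone hmono hexh
  have hconv : Filter.Tendsto
      (fun n : ℕ => ∑ k ∈ Finset.Icc (-(n:ℤ)) (n:ℤ),
        fourierCoeff (F : AddCircle T → ℂ) k • fourier k)
      Filter.atTop (nhds F) := hsum.comp htendsto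
  have := (ContinuousMap.tendsto_iff_tendstoUniformly).mp hconv
  convert this using 2 with n x
  simp only [ContinuousMap.coe_sum, Finset.sum_apply, ContinuousMap.coe_smul,
    Pi.smul_apply, smul_eq_mul]
  rfl
  rfl


end AuxBernstein

/-- Uniform convergence of symmetric Fourier partial sums of an `α`-Hölder continuous
function on the circle with `α > 1/2` (one-dimensional case of the uniform convergence
of Fourier series of Hölder functions on the torus). -/
theorem fourier_partial_sums_tendstoUniformly (T : ℝ) [hT : Fact (0 < T)]
    (α C : ℝ) (hα : α ∈ Set.Ioc (1 / 2 : ℝ) 1) (hC : 0 ≤ C)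
    (f : AddCircle T → ℂ)
    (hf : ∀ x y : AddCircle T, ‖f x - f y‖ ≤ C * dist x y ^ α) :
    TendstoUniformly
      (fun (n : ℕ) (x : AddCircle T) =>
        ∑ k ∈ Finset.Icc (-(n : ℤ)) (n : ℤ), fourierCoeff f k * fourier k x)
      f atTop :=
  fourier_partial_sums_tendstoUniformly' T α C hα hC f hf
end
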